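/- Let (𝒯,X,r) be a nice tree decomposition of a terminal graph (G,T) of width at most w, where w ≥ 1 and n = |V(G)| ≥ 1. Then |V(𝒯)| ≤ (w+4)·n. (In fact, the stronger bound |V(𝒯)| ≤ 2n − |T| + (w+2)·max{0, n − |T| − 1} holds.) -/

import Mathlib

open SimpleGraph

/-- A proper `k`-coloring of a graph. -/
def IsColoring {W : Type*} (G : SimpleGraph W) (k : ℕ) (α : W → Fin k) : Prop :=
  ∀ u v : W, G.Adj u v → α u ≠ α v

/-- The `k`-color graph `C_k(G)`: nodes are proper `k`-colorings of `G`,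
two colorings being adjacent iff they differ on exactly one vertex. -/
def colorGraph {W : Type*} (G : SimpleGraph W) (k : ℕ) :
    SimpleGraph {α : W → Fin k // IsColoring G k α} where
  Adj α β := ∃! w, α.1 w ≠ β.1 w
  symm := ⟨by
    rintro α β ⟨w, hw, hu⟩
    exact ⟨w, hw.symm, fun u hu' => hu u hu'.symm⟩⟩
  loopless := ⟨by
    rintro α ⟨w, hw, -⟩
    exact hw rfl⟩

/-- The subgraph of a labeled graph consisting of the edges between
equally labeled nodes. -/
def sameLabelSub {N L : Type*} (H : SimpleGraph N) (f : N → L) : SimpleGraph N where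
  Adj x y := H.Adj x y ∧ f x = f y
  symm := ⟨fun _ _ h => ⟨h.1.symm, h.2.symm⟩⟩
  loopless := ⟨fun x h => H.loopless.irrefl x h.1⟩

/-- The quotient graph obtained from a labeled graph by contracting every
(maximal) connected set of equally labeled nodes (i.e. every label component)
into a single node. -/
def quotGraph {N L : Type*} (H : SimpleGraph N) (f : N → L) :
    SimpleGraph (sameLabelSub H f).ConnectedComponent where
  Adj c d := c ≠ d ∧ ∃ a b, (sameLabelSub H f).connectedComponentMk a = c ∧
      (sameLabelSub H f).connectedComponentMk b = d ∧ H.Adj a b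
  symm := ⟨by
    rintro c d ⟨hne, a, b, ha, hb, hab⟩
    exact ⟨hne.symm, b, a, hb, ha, hab.symm⟩⟩
  loopless := ⟨fun c h => h.1 rfl⟩

/-- The common label of a label component. -/
def quotLabel {N L : Type*} (H : SimpleGraph N) (f : N → L) :
    (sameLabelSub H f).ConnectedComponent → L :=
  SimpleGraph.ConnectedComponent.lift f (by
    intro v w p hp
    clear hp
    induction p with
    | nil => rfl
    | cons h _ ih => exact (id h : H.Adj _ _ ∧ f _ = f _).2.trans ih)

/-- The label of a coloring: its restriction to the terminal set `T`. -/
def csgLabelFun {W : Type*} (G : SimpleGraph W) (k : ℕ) (T : Set W) :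
    {α : W → Fin k // IsColoring G k α} → (T → Fin k) :=
  fun α t => α.1 t.1

/-- The node set of the contracted solution graph: the label components. -/
abbrev CSGNode {W : Type*} (G : SimpleGraph W) (k : ℕ) (T : Set W) :=
  (sameLabelSub (colorGraph G k) (csgLabelFun G k T)).ConnectedComponent

/-- The contracted solution graph `C^c_k(G,T)`. -/
def CSG {W : Type*} (G : SimpleGraph W) (k : ℕ) (T : Set W) : SimpleGraph (CSGNode G k T) :=
  quotGraph (colorGraph G k) (csgLabelFun G k T)

/-- The `γ`-node of the contracted solution graph: the label component containing `γ`. -/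
def csgNode {W : Type*} (G : SimpleGraph W) (k : ℕ) (T : Set W)
    (γ : {α : W → Fin k // IsColoring G k α}) : CSGNode G k T :=
  (sameLabelSub (colorGraph G k) (csgLabelFun G k T)).connectedComponentMk γ

/-- The label of a node of the contracted solution graph: the common restriction
to `T` of its colorings. -/
def csgLabel {W : Type*} (G : SimpleGraph W) (k : ℕ) (T : Set W) :
    CSGNode G k T → (T → Fin k) :=
  quotLabel (colorGraph G k) (csgLabelFun G k T)

/-- The restriction of a proper coloring to an induced subgraph. -/
def restrictColoring {W : Type*} (G : SimpleGraph W) (k : ℕ) (S : Set W)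
    (γ : {α : W → Fin k // IsColoring G k α}) :
    {α : S → Fin k // IsColoring (G.induce S) k α} :=
  ⟨fun u => γ.1 u.1, fun u w h => γ.2 u.1 w.1 h⟩

/-- A graph is chordal if it contains no induced cycle of length greater than 3. -/
def Chordal {W : Type*} (G : SimpleGraph W) : Prop :=
  ∀ n : ℕ, 4 ≤ n → IsEmpty (SimpleGraph.cycleGraph n ↪g G)

/-- `S` is a vertex cut: `G - S` is disconnected. -/
def IsVertexCut {W : Type*} (G : SimpleGraph W) (S : Set W) : Prop :=
  ¬ (G.induce Sᶜ).Preconnected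

/-- `G` is `l`-connected. -/
def LConnected {W : Type*} (G : SimpleGraph W) (l : ℕ) : Prop :=
  G.Connected ∧ l + 1 ≤ Nat.card W ∧ ∀ S : Set W, IsVertexCut G S → l ≤ S.ncard

/-- A labeled graph `(H,ℓ)`, whose labels are `k`-colorings of the complete graph
on a vertex (type) `S`, is an `(|S|,k)`-color-complete graph. -/
def IsColorComplete {N S : Type*} (k : ℕ) (H : SimpleGraph N) (ℓ : N → S → Fin k) : Prop :=
  (∀ x, Function.Injective (ℓ x)) ∧
  (∀ f : S → Fin k, Function.Injective f → ∃! x, ℓ x = f) ∧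
  (∀ x y, H.Adj x y ↔ ∃! s, ℓ x s ≠ ℓ y s)

/-- The injective neighborhood property. -/
def INP {N L : Type*} (H : SimpleGraph N) (ℓ : N → L) : Prop :=
  ∀ u v w : N, H.Adj u v → H.Adj u w → v ≠ w → ℓ v ≠ ℓ w

/-- The weight `w(P)` of a walk `P` in a labeled graph: the sum over the vertices `x`
of `P` of the number of colors used by labels of neighbors of `x` in `P` but not by
the label of `x`. -/
noncomputable def walkWeight {N S : Type*} {k : ℕ} {G : SimpleGraph N} (ℓ : N → S → Fin k)
    {a b : N} (P : G.Walk a b) : ℕ :=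
  letI := Classical.decEq N
  ∑ x ∈ P.support.toFinset,
    ((⋃ y ∈ P.toSubgraph.neighborSet x, Set.range (ℓ y)) \ Set.range (ℓ x)).ncard

/-- `NiceTD G w U T n` holds iff there is a nice tree decomposition, of width at most
`w` and with exactly `n` nodes, of the terminal graph `(G[U], T)`, following the
recursive definition via leaf, forget, introduce and join operations (the bag of every
node being the terminal set of the corresponding recursive call, of size at most
`w + 1`). -/
inductive NiceTD {V : Type*} (G : SimpleGraph V) (w : ℕ) : Set V → Set V → ℕ → Prop
  | leaf (T : Set V) (hbag : T.ncard ≤ w + 1) : NiceTD G w T T 1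
  | forget (U T : Set V) (v : V) (hvU : v ∈ U) (hvT : v ∉ T)
      (hbag : T.ncard ≤ w + 1) (n : ℕ)
      (prev : NiceTD G w U (T ∪ {v}) n) : NiceTD G w U T (n + 1)
  | introduce (U T : Set V) (v : V) (hv : v ∈ T) (hTU : T ⊆ U) (hne : T ≠ U)
      (hN : ∀ u ∈ U, G.Adj v u → u ∈ T) (hbag : T.ncard ≤ w + 1) (n : ℕ)
      (prev : NiceTD G w (U \ {v}) (T \ {v}) n) : NiceTD G w U T (n + 1)
  | join (U₁ U₂ T : Set V) (hcap : U₁ ∩ U₂ = T) (hne1 : U₁ ≠ T) (hne2 : U₂ ≠ T)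
      (hedge : ∀ u v' : V, u ∈ U₁ ∪ U₂ → v' ∈ U₁ ∪ U₂ → G.Adj u v' →
        (u ∈ U₁ ∧ v' ∈ U₁) ∨ (u ∈ U₂ ∧ v' ∈ U₂))
      (hbag : T.ncard ≤ w + 1) (n₁ n₂ : ℕ)
      (p1 : NiceTD G w U₁ T n₁) (p2 : NiceTD G w U₂ T n₂) :
      NiceTD G w (U₁ ∪ U₂) T (n₁ + n₂ + 1)

namespace NiceTD

variable {V : Type*} {G : SimpleGraph V} {w : ℕ} {U T : Set V} {n : ℕ}

theorem subset (h : NiceTD G w U T n) : T ⊆ U := by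
  induction h with
  | leaf => exact subset_rfl
  | forget _ _ _ _ _ _ _ _ ih => exact Set.subset_union_left.trans ih
  | introduce _ _ _ _ hTU => exact hTU
  | join _ _ _ hcap => exact (hcap ▸ Set.inter_subset_left).trans Set.subset_union_left

/-- Each forget or introduce node raises the bound by at least one. At a join node the bounds of
the two sides sum to `w + 2 - |T|` less than the new bound, and `|T| ≤ w + 1` pays for the node. -/
theorem le_two_mul_ncard_sub_add (h : NiceTD G w U T n) (hU : 0 < U.ncard) :
    n ≤ 2 * U.ncard - T.ncard + (w + 2) * (U.ncard - T.ncard - 1) := by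
  induction h with
  | leaf T =>
    rw [Nat.sub_self, Nat.zero_sub, Nat.mul_zero]
    omega
  | forget U T v _ hvT _ _ prev ih =>
    have hU_fin := Set.finite_of_ncard_pos hU
    have hcard : (T ∪ {v}).ncard = T.ncard + 1 := by
      rw [Set.union_singleton, Set.ncard_insert_of_notMem hvT (hU_fin.subset
        (Set.subset_union_left.trans prev.subset))]
    have hle : (T ∪ {v}).ncard ≤ U.ncard := Set.ncard_le_ncard prev.subset hU_fin
    have hmono : (w + 2) * (U.ncard - (T.ncard + 1) - 1) ≤ (w + 2) * (U.ncard - T.ncard - 1) :=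
      Nat.mul_le_mul_left _ (by omega)
    have hb := ih hU
    rw [hcard] at hb hle
    omega
  | introduce U T v hv hTU hne _ _ _ _ ih =>
    have hU_fin := Set.finite_of_ncard_pos hU
    have hlt : T.ncard < U.ncard := Set.ncard_lt_ncard (hTU.ssubset_of_ne hne) hU_fin
    have hT : 0 < T.ncard := (Set.ncard_pos (hU_fin.subset hTU)).mpr ⟨v, hv⟩
    have hb := ih (by rw [Set.ncard_sdiff_singleton_of_mem (hTU hv)]; omega)
    rw [Set.ncard_sdiff_singleton_of_mem (hTU hv), Set.ncard_sdiff_singleton_of_mem hv,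
      show U.ncard - 1 - (T.ncard - 1) - 1 = U.ncard - T.ncard - 1 by omega] at hb
    omega
  | join U₁ U₂ T hcap hne₁ hne₂ _ hbag _ _ p₁ p₂ ih₁ ih₂ =>
    have hU_fin := Set.finite_of_ncard_pos hU
    have hU₁ : U₁.Finite := hU_fin.subset Set.subset_union_left
    have hU₂ : U₂.Finite := hU_fin.subset Set.subset_union_right
    have hlt₁ : T.ncard < U₁.ncard := Set.ncard_lt_ncard (p₁.subset.ssubset_of_ne hne₁.symm) hU₁
    have hlt₂ : T.ncard < U₂.ncard := Set.ncard_lt_ncard (p₂.subset.ssubset_of_ne hne₂.symm) hU₂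
    have hb₁ := ih₁ (by omega)
    have hb₂ := ih₂ (by omega)
    have hcard : (U₁ ∪ U₂).ncard + T.ncard = U₁.ncard + U₂.ncard := by
      rw [← hcap]; exact Set.ncard_union_add_ncard_inter U₁ U₂ hU₁ hU₂
    rw [show (U₁ ∪ U₂).ncard - T.ncard - 1 =
        (U₁.ncard - T.ncard - 1) + (U₂.ncard - T.ncard - 1) + 1 by omega,
      Nat.mul_add, Nat.mul_add, Nat.mul_one]
    omega

end NiceTD

theorem statement_7_general {V : Type} (G : SimpleGraph V)
    (w : ℕ) (U T : Set V) (nt : ℕ) (h : NiceTD G w U T nt)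
    (hn : 1 ≤ U.ncard) :
    nt ≤ (w + 4) * U.ncard ∧
      nt ≤ 2 * U.ncard - T.ncard + (w + 2) * (U.ncard - T.ncard - 1) := by
  have hbound := h.le_two_mul_ncard_sub_add hn
  refine ⟨?_, hbound⟩
  have hmono : (w + 2) * (U.ncard - T.ncard - 1) ≤ (w + 2) * U.ncard :=
    Nat.mul_le_mul_left _ (by omega)
  rw [show (w + 4) * U.ncard = 2 * U.ncard + (w + 2) * U.ncard by ring]
  omega

/-- a nice tree decomposition of `(G,T)` of width at most `w ≥ 1`, where
`n = |V(G)| ≥ 1`, has at most `(w+4)·n` nodes; in fact it has at most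
`2n − |T| + (w+2)·max{0, n − |T| − 1}` nodes. -/
theorem statement_7 {V : Type} [Fintype V] [DecidableEq V] (G : SimpleGraph V)
    (w : ℕ) (hw : 1 ≤ w) (U T : Set V) (nt : ℕ) (h : NiceTD G w U T nt)
    (hn : 1 ≤ U.ncard) :
    nt ≤ (w + 4) * U.ncard ∧
      nt ≤ 2 * U.ncard - T.ncard + (w + 2) * (U.ncard - T.ncard - 1) :=
  statement_7_general G w U T nt h hn
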